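/- arXiv:1402.3194 — 2 statements merged into one kernel-verified Lean document; each statement's English description precedes it below -/
import Mathlib

section
/- Let g, γ, h₁, h₂ > 0, and let μ be a real root of Q(μ) = ((μ−u₁)²−g h₁)((μ−u₂)²−g h₂) − γ g² h₁ h₂ with (μ−u₁)² ≠ g h₁. Then the vector r := e₁ + ((μ−u₁)/h₁)e₃ − c_μ(e₂ + ((μ−u₂)/h₂)e₄), where c_μ := 1 − (μ−u₁)²/(g h₁), satisfies A_x(u)·r = μ·r, i.e., r is a right eigenvector of A_x(u) for eigenvalue μ. -/
/-! With `a = (μ - u₁)/h₁`, `b = (μ - u₂)/h₂` and `c = 1 - (μ - u₁)²/(g h₁)`, the vector is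
`r = (1, -c, a, -c b, 0, 0)`. The mass rows of `A_x r = μ r` and the first momentum row hold
for every `μ`; the second momentum row reduces to `γ g = c (g - (μ - u₂)²/h₂)`, which after
multiplying by `g h₁ h₂` is exactly `Q(μ) = 0`. -/

open Matrix

noncomputable def Ax (g γ h₁ h₂ u₁ u₂ : ℝ) : Matrix (Fin 6) (Fin 6) ℝ :=
  !![u₁, 0, h₁, 0, 0, 0;
     0, u₂, 0, h₂, 0, 0;
     g, g, u₁, 0, 0, 0;
     γ * g, g, 0, u₂, 0, 0;
     0, 0, 0, 0, u₁, 0;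
     0, 0, 0, 0, 0, u₂]

lemma Ax_mulVec (g γ h₁ h₂ u₁ u₂ x₁ x₂ x₃ x₄ x₅ x₆ : ℝ) :
    Ax g γ h₁ h₂ u₁ u₂ *ᵥ ![x₁, x₂, x₃, x₄, x₅, x₆] =
      ![u₁ * x₁ + h₁ * x₃, u₂ * x₂ + h₂ * x₄, g * x₁ + g * x₂ + u₁ * x₃,
        γ * g * x₁ + g * x₂ + u₂ * x₄, u₁ * x₅, u₂ * x₆] := by
  ext i
  fin_cases i <;> simp [Ax, mulVec, dotProduct, Fin.sum_univ_six]

lemma gamma_mul_eq_of_dispersion {g γ h₁ h₂ u₁ u₂ μ : ℝ} (hg : g ≠ 0) (hh₁ : h₁ ≠ 0)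
    (hh₂ : h₂ ≠ 0)
    (hQ : ((μ - u₁)^2 - g * h₁) * ((μ - u₂)^2 - g * h₂) - γ * g^2 * h₁ * h₂ = 0) :
    γ * g = (1 - (μ - u₁)^2 / (g * h₁)) * (g - (μ - u₂)^2 / h₂) := by
  field_simp
  linear_combination -hQ

theorem right_eigenvector_general (g γ h₁ h₂ u₁ u₂ : ℝ)
    (hg : 0 < g) (hh₁ : 0 < h₁) (hh₂ : 0 < h₂) (μ : ℝ)
    (hQ : ((μ - u₁)^2 - g * h₁) * ((μ - u₂)^2 - g * h₂) - γ * g^2 * h₁ * h₂ = 0) :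
    (Ax g γ h₁ h₂ u₁ u₂).mulVec
        (![1, -(1 - (μ - u₁)^2 / (g * h₁)), (μ - u₁) / h₁,
           -(1 - (μ - u₁)^2 / (g * h₁)) * ((μ - u₂) / h₂), 0, 0]) =
      μ • (![1, -(1 - (μ - u₁)^2 / (g * h₁)), (μ - u₁) / h₁,
           -(1 - (μ - u₁)^2 / (g * h₁)) * ((μ - u₂) / h₂), 0, 0]) := by
  have hdisp := gamma_mul_eq_of_dispersion hg.ne' hh₁.ne' hh₂.ne' hQ
  rw [Ax_mulVec]
  simp only [smul_cons, smul_empty, smul_eq_mul, vecCons_inj, and_true]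
  refine ⟨?_, ?_, ?_, ?_, by ring, by ring⟩
  · field_simp; ring
  · field_simp; ring
  · field_simp; ring
  · rw [mul_one, hdisp]; ring

theorem right_eigenvector (g γ h₁ h₂ u₁ u₂ : ℝ)
    (hg : 0 < g) (hγ : 0 < γ) (hh₁ : 0 < h₁) (hh₂ : 0 < h₂) (μ : ℝ)
    (hQ : ((μ - u₁)^2 - g * h₁) * ((μ - u₂)^2 - g * h₂) - γ * g^2 * h₁ * h₂ = 0)
    (hne : (μ - u₁)^2 ≠ g * h₁) :
    (Ax g γ h₁ h₂ u₁ u₂).mulVec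
        (![1, -(1 - (μ - u₁)^2 / (g * h₁)), (μ - u₁) / h₁,
           -(1 - (μ - u₁)^2 / (g * h₁)) * ((μ - u₂) / h₂), 0, 0]) =
      μ • (![1, -(1 - (μ - u₁)^2 / (g * h₁)), (μ - u₁) / h₁,
           -(1 - (μ - u₁)^2 / (g * h₁)) * ((μ - u₂) / h₂), 0, 0]) :=
  right_eigenvector_general g γ h₁ h₂ u₁ u₂ hg hh₁ hh₂ μ hQ
end

section
/- The characteristic polynomial of the 8×8 augmented-model matrix A^r_x(v) satisfies det(A^r_x(v) − μI₈) = μ²·det(A_x(u) − μI₆), where u consists of the first six components of v. -/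
open Matrix

noncomputable def Arx (g γ f h₁ h₂ u₁ u₂ v₁ v₂ w₁ w₂ : ℝ) : Matrix (Fin 8) (Fin 8) ℝ :=
  !![u₁, 0, h₁, 0, 0, 0, 0, 0;
     0, u₂, 0, h₂, 0, 0, 0, 0;
     g, g, u₁, 0, v₁, 0, 0, 0;
     γ * g, g, 0, u₂, 0, v₂, 0, 0;
     0, 0, 0, 0, 0, 0, 0, 0;
     0, 0, 0, 0, 0, 0, 0, 0;
     0, 0, w₁ + f, 0, 0, 0, u₁, 0;
     0, 0, 0, w₂ + f, 0, 0, 0, u₂]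

/-! Rows 4 and 5 of `Arx - μ • 1` are `-μ` times unit rows, so Laplace expansion along them
contributes the factor `μ ^ 2` and deletes columns 4 and 5, which hold `v₁, v₂`.
The remaining 6×6 minor differs from `Ax - μ • 1` only by the entries `w₁ + f`, `w₂ + f`; both
matrices are block triangular for the blocks `{4, 5}`, `{0, 1, 2, 3}`, and those entries lie off
the diagonal blocks, so they do not affect the determinant. -/

namespace Matrix

variable {R : Type*} [CommRing R]

theorem det_eq_mul_det_submatrix_of_row_eq_single {n : ℕ}
    (M : Matrix (Fin (n + 1)) (Fin (n + 1)) R) (i : Fin (n + 1)) (c : R)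
    (hrow : M i = Pi.single i c) :
    M.det = c * (M.submatrix i.succAbove i.succAbove).det := by
  rw [det_succ_row M i, Finset.sum_eq_single i]
  · simp [hrow, ← two_mul, pow_mul]
  · intro j _ hj
    simp [hrow, hj]
  · simp

theorem det_eq_det_of_blockTriangular {m α : Type*} [Fintype m] [DecidableEq m] [LinearOrder α]
    {M N : Matrix m m R} {b : m → α} (hM : M.BlockTriangular b) (hN : N.BlockTriangular b)
    (hdiag : ∀ i j, b i = b j → M i j = N i j) :
    M.det = N.det := by
  rw [hM.det, hN.det]
  refine Finset.prod_congr rfl fun k _ => congrArg det ?_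
  ext i j
  exact hdiag i j (i.2.trans j.2.symm)

end Matrix

theorem augmented_charpoly (g γ f h₁ h₂ u₁ u₂ v₁ v₂ w₁ w₂ μ : ℝ) :
    (Arx g γ f h₁ h₂ u₁ u₂ v₁ v₂ w₁ w₂ - μ • (1 : Matrix (Fin 8) (Fin 8) ℝ)).det =
      μ^2 * (Ax g γ h₁ h₂ u₁ u₂ - μ • (1 : Matrix (Fin 6) (Fin 6) ℝ)).det := by
  set M := Arx g γ f h₁ h₂ u₁ u₂ v₁ v₂ w₁ w₂ - μ • (1 : Matrix (Fin 8) (Fin 8) ℝ) with hM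
  set M' := M.submatrix (4 : Fin 8).succAbove (4 : Fin 8).succAbove with hM'
  set N := Ax g γ h₁ h₂ u₁ u₂ - μ • (1 : Matrix (Fin 6) (Fin 6) ℝ) with hN
  have hrow : M 4 = Pi.single 4 (-μ) := by
    ext j
    fin_cases j <;> simp [hM, Arx, one_apply]
  have hrow' : M' 4 = Pi.single 4 (-μ) := by
    ext j
    fin_cases j <;> simp [hM', hM, Arx, Fin.succAbove, one_apply]
  let b : Fin 6 → ℕ := ![1, 1, 1, 1, 0, 0]
  have hMb : (M'.submatrix (4 : Fin 7).succAbove (4 : Fin 7).succAbove).BlockTriangular b := by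
    intro i j hij
    fin_cases i <;> fin_cases j <;> simp [b, hM', hM, Arx, Fin.succAbove, one_apply] at hij ⊢
  have hNb : N.BlockTriangular b := by
    intro i j hij
    fin_cases i <;> fin_cases j <;> simp [b, hN, Ax, one_apply] at hij ⊢
  have hdiag : ∀ i j, b i = b j →
      M'.submatrix (4 : Fin 7).succAbove (4 : Fin 7).succAbove i j = N i j := by
    intro i j hij
    fin_cases i <;> fin_cases j <;>
      simp [b, hM', hM, hN, Ax, Arx, Fin.succAbove, one_apply] at hij ⊢
  rw [det_eq_mul_det_submatrix_of_row_eq_single M 4 _ hrow,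
    det_eq_mul_det_submatrix_of_row_eq_single M' 4 _ hrow',
    det_eq_det_of_blockTriangular hMb hNb hdiag]
  ring
end
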